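/- Let Δt, ν, C_p, μ, C_w, C_q be positive real numbers with μ > C_w, and set α := (1 + ν·C_p^{-2}·Δt + (μ/2)·Δt)/(1 + (C_w/2)·Δt) and B := ((C_w·ν^{-1} + C_q)/(1 + (C_w/2)·Δt))·Δt³. Let (a_n)_{n≥0} be a sequence of nonnegative real numbers with a_0 = 0 satisfying α·a_{n+1} ≤ a_n + B for every n ≥ 0. Then for every n ≥ 0, a_n ≤ ((C_w·ν^{-1} + C_q)/(ν·C_p^{-2}))·Δt², and hence √(a_n) ≤ √((C_w·ν^{-1} + C_q)/(ν·C_p^{-2}))·Δt. -/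

import Mathlib

/-!
The constant `M = K Δt² / (ν C_p⁻²)`, with `K = C_w ν⁻¹ + C_q`, is a supersolution of the
recursion: `M + B ≤ α M`, because after clearing the common denominator `1 + C_w Δt / 2` the
difference `α M - M - B` is `(μ - C_w) Δt M / 2 ≥ 0` (the terms `ν C_p⁻² Δt M` and `K Δt³` cancel).
Since `α > 0`, induction from `a 0 = 0 ≤ M` keeps every `a n` below `M`.
-/

theorem le_of_mul_succ_le_add {𝕜 : Type*} [Field 𝕜] [LinearOrder 𝕜] [IsStrictOrderedRing 𝕜]
    {α B M : 𝕜} {a : ℕ → 𝕜} (hα : 0 < α) (h0 : a 0 ≤ M) (hM : M + B ≤ α * M)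
    (hrec : ∀ n, α * a (n + 1) ≤ a n + B) (n : ℕ) : a n ≤ M := by
  induction n with
  | zero => exact h0
  | succ n ih =>
    refine le_of_mul_le_mul_left ?_ hα
    calc α * a (n + 1) ≤ a n + B := hrec n
      _ ≤ M + B := by gcongr
      _ ≤ α * M := hM

theorem div_mul_sq_add_le_mul {c K w μ Δt : ℝ} (hc : 0 < c) (hK : 0 ≤ K) (hw : 0 ≤ w)
    (hwμ : w ≤ μ) (hΔt : 0 ≤ Δt) :
    K / c * Δt ^ 2 + K / (1 + (w / 2) * Δt) * Δt ^ 3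
      ≤ (1 + c * Δt + (μ / 2) * Δt) / (1 + (w / 2) * Δt) * (K / c * Δt ^ 2) := by
  have hD : 0 < 1 + (w / 2) * Δt := by positivity
  have hgap : (1 + c * Δt + (μ / 2) * Δt) / (1 + (w / 2) * Δt) * (K / c * Δt ^ 2)
      - (K / c * Δt ^ 2 + K / (1 + (w / 2) * Δt) * Δt ^ 3)
      = (μ - w) / 2 * Δt * (K / c * Δt ^ 2) / (1 + (w / 2) * Δt) := by
    field_simp
    ring
  have hμw : 0 ≤ μ - w := sub_nonneg.mpr hwμ
  have : 0 ≤ (μ - w) / 2 * Δt * (K / c * Δt ^ 2) / (1 + (w / 2) * Δt) := by positivity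
  linarith

theorem cda_projection_error_recursion_general
    (Δt ν C_p μ C_w C_q : ℝ)
    (hΔt : 0 < Δt) (hν : 0 < ν) (hCp : 0 < C_p)
    (hCw : 0 < C_w) (hCq : 0 < C_q) (hμCw : C_w < μ)
    (α B : ℝ)
    (hα : α = (1 + ν * (C_p ^ 2)⁻¹ * Δt + (μ / 2) * Δt) / (1 + (C_w / 2) * Δt))
    (hB : B = ((C_w * ν⁻¹ + C_q) / (1 + (C_w / 2) * Δt)) * Δt ^ 3)
    (a : ℕ → ℝ) (ha0 : a 0 = 0)
    (hrec : ∀ n : ℕ, α * a (n + 1) ≤ a n + B) :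
    ∀ n : ℕ,
      a n ≤ ((C_w * ν⁻¹ + C_q) / (ν * (C_p ^ 2)⁻¹)) * Δt ^ 2 ∧
        Real.sqrt (a n) ≤ Real.sqrt ((C_w * ν⁻¹ + C_q) / (ν * (C_p ^ 2)⁻¹)) * Δt := by
  have hα_pos : 0 < α := by
    have hμ : 0 < μ := hCw.trans hμCw
    rw [hα]; positivity
  have hbound := le_of_mul_succ_le_add hα_pos (by rw [ha0]; positivity)
    (hα ▸ hB ▸ div_mul_sq_add_le_mul (by positivity) (by positivity) hCw.le hμCw.le hΔt.le) hrec
  refine fun n ↦ ⟨hbound n, ?_⟩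
  calc Real.sqrt (a n) ≤ Real.sqrt (((C_w * ν⁻¹ + C_q) / (ν * (C_p ^ 2)⁻¹)) * Δt ^ 2) :=
        Real.sqrt_le_sqrt (hbound n)
    _ = Real.sqrt ((C_w * ν⁻¹ + C_q) / (ν * (C_p ^ 2)⁻¹)) * Δt := by
        rw [Real.sqrt_mul (by positivity), Real.sqrt_sq hΔt.le]

/-- Algebraic core of the long-time first-order convergence proof for the
CDA-Projection method (Theorem 3.1). -/
theorem cda_projection_error_recursion
    (Δt ν C_p μ C_w C_q : ℝ)
    (hΔt : 0 < Δt) (hν : 0 < ν) (hCp : 0 < C_p) (hμ : 0 < μ)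
    (hCw : 0 < C_w) (hCq : 0 < C_q) (hμCw : C_w < μ)
    (α B : ℝ)
    (hα : α = (1 + ν * (C_p ^ 2)⁻¹ * Δt + (μ / 2) * Δt) / (1 + (C_w / 2) * Δt))
    (hB : B = ((C_w * ν⁻¹ + C_q) / (1 + (C_w / 2) * Δt)) * Δt ^ 3)
    (a : ℕ → ℝ) (ha : ∀ n : ℕ, 0 ≤ a n) (ha0 : a 0 = 0)
    (hrec : ∀ n : ℕ, α * a (n + 1) ≤ a n + B) :
    ∀ n : ℕ,
      a n ≤ ((C_w * ν⁻¹ + C_q) / (ν * (C_p ^ 2)⁻¹)) * Δt ^ 2 ∧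
        Real.sqrt (a n) ≤ Real.sqrt ((C_w * ν⁻¹ + C_q) / (ν * (C_p ^ 2)⁻¹)) * Δt :=
  cda_projection_error_recursion_general Δt ν C_p μ C_w C_q hΔt hν hCp hCw hCq hμCw α B hα hB a ha0
    hrec
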